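/- Let Z = (Z_g)_{g≥0} be a single DBPC started at 1 with survival probability π > 0, offspring weight p_{1,o} ≠ 1, and not both p_{0,o} = 1 and p_{1,c} = 1. Then for every sequence (b_N)_{N∈ℕ} with b_N → ∞: lim_{N→∞} P(∃ g ∈ ℕ₀: Z̄_g ≥ b_N) = lim_{N→∞} P(∃ g ∈ ℕ₀: Z_g ≥ b_N) = π, where Z̄_g = Σ_{i=0}^{g} Z_i is the total size up to generation g. -/

import Mathlib

open MeasureTheory ProbabilityTheory Filter

/-- A discrete-time branching process with cooperation (DBPC) with offspring
distribution `Lo`, cooperation distribution `Lc`, started at `k₀`. -/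
structure DBPC {Ω : Type*} [MeasurableSpace Ω] (P : Measure Ω)
    (Lo Lc : PMF ℕ) (k₀ : ℕ) where
  /-- offspring variables `X g i` -/
  X : ℕ → ℕ → Ω → ℕ
  /-- cooperation variables `Y g i j` -/
  Y : ℕ → ℕ → ℕ → Ω → ℕ
  /-- the process -/
  Z : ℕ → Ω → ℕ
  measX : ∀ g i, Measurable (X g i)
  measY : ∀ g i j, Measurable (Y g i j)
  measZ : ∀ g, Measurable (Z g)
  indep : iIndepFun
    (fun p : (ℕ × ℕ) ⊕ (ℕ × ℕ × ℕ) =>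
      Sum.elim (fun q : ℕ × ℕ => X q.1 q.2)
        (fun q : ℕ × ℕ × ℕ => Y q.1 q.2.1 q.2.2) p) P
  distX : ∀ g i, P.map (X g i) = Lo.toMeasure
  distY : ∀ g i j, P.map (Y g i j) = Lc.toMeasure
  init : ∀ᵐ ω ∂P, Z 0 ω = k₀
  step : ∀ g : ℕ, ∀ᵐ ω ∂P, Z (g + 1) ω =
    (∑ i ∈ Finset.Icc 1 (Z g ω), X (g + 1) i ω) +
      ∑ i ∈ Finset.Icc 1 (Z g ω), ∑ j ∈ Finset.Ico 1 i, Y (g + 1) i j ω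

/-- The mean of a probability distribution on `ℕ`. -/
noncomputable def pmfMean (L : PMF ℕ) : ℝ := ∑' j : ℕ, (j : ℝ) * (L j).toReal

/-- The variance of a probability distribution on `ℕ`. -/
noncomputable def pmfVar (L : PMF ℕ) : ℝ :=
  ∑' j : ℕ, ((j : ℝ) - pmfMean L) ^ 2 * (L j).toReal


/-!
Since `0` is absorbing, an extinct path has bounded total size, so the events
`{∃ g, x ≤ Z̄_g}` decrease to the survival event as `x → ∞`. Conversely, almost every surviving
path is unbounded, because a DBPC with `p_{1,o} ≠ 1` started at `1` cannot stay in a window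
`[1, K]` forever. If `p_{0,o} = 1` it dies in the first generation. Otherwise, from every state
`k` of the window there are values `x, y` of positive weight such that the map
`n ↦ x n + y n(n-1)/2` either kills `k` or is strictly increasing from `k` on. The event that all
offspring variables equal `x` and all cooperation variables equal `y` during the next `K`
generations has a fixed positive probability, is independent of the past, and forces the path
out of the window; so staying in the window for `n` blocks of `K` generations has probability at
most `rⁿ` with `r < 1`. Sandwiching `{∃ g, x ≤ Z_g}` between survival and `{∃ g, x ≤ Z̄_g}`
gives both limits.
-/

open Topology

lemma PMF.exists_ne_apply_ne_zero {α : Type*} (p : PMF α) {a : α} (h : p a ≠ 1) :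
    ∃ b ≠ a, p b ≠ 0 := by
  by_contra! hp
  exact h ((tsum_eq_single a hp).symm.trans p.tsum_coe)

lemma Nat.sum_Icc_sub_one_eq_choose_two (n : ℕ) :
    ∑ i ∈ Finset.Icc 1 n, (i - 1) = n.choose 2 := by
  induction n with
  | zero => rfl
  | succ n ih =>
    rw [Finset.sum_Icc_succ_top (by omega), ih, Nat.choose_succ_succ', Nat.choose_one_right,
      add_comm, Nat.add_sub_cancel]

lemma sum_range_le_of_forall_add_eq_zero {u : ℕ → ℕ} {g₀ : ℕ} (hu : ∀ d, u (g₀ + d) = 0)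
    (n : ℕ) : ∑ i ∈ Finset.range n, u i ≤ ∑ i ∈ Finset.range g₀, u i := by
  rcases le_total n g₀ with h | h
  · exact Finset.sum_le_sum_of_subset (Finset.range_subset_range.2 h)
  · rw [← Finset.sum_range_add_sum_Ico _ h, Finset.sum_Ico_eq_sum_range]
    simp [hu]

lemma forall_exists_le_sum_range_iff {u : ℕ → ℕ} (habs : ∀ g, u g = 0 → ∀ d, u (g + d) = 0) :
    (∀ x : ℝ, ∃ g, x ≤ ((∑ i ∈ Finset.range (g + 1), u i : ℕ) : ℝ)) ↔ ∀ g, 0 < u g := by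
  constructor
  · intro hreach
    by_contra! hext
    obtain ⟨g₀, hg₀⟩ := hext
    obtain ⟨g, hg⟩ := hreach (∑ i ∈ Finset.range g₀, u i + 1)
    have hbdd : ((∑ i ∈ Finset.range (g + 1), u i : ℕ) : ℝ) ≤ ∑ i ∈ Finset.range g₀, u i := by
      exact_mod_cast sum_range_le_of_forall_add_eq_zero (habs g₀ (by omega)) (g + 1)
    push_cast at hg hbdd
    linarith
  · intro hsurv x
    refine ⟨⌈x⌉₊, (Nat.le_ceil x).trans ?_⟩
    have : (Finset.range (⌈x⌉₊ + 1)).card • 1 ≤ ∑ i ∈ Finset.range (⌈x⌉₊ + 1), u i :=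
      Finset.card_nsmul_le_sum _ _ 1 fun i _ => hsurv i
    simp only [Finset.card_range, smul_eq_mul, mul_one] at this
    exact_mod_cast (show ⌈x⌉₊ ≤ ∑ i ∈ Finset.range (⌈x⌉₊ + 1), u i by omega)

lemma sum_measure_preimage_singleton_inter_le {Ω β : Type*} [MeasurableSpace Ω] (μ : Measure Ω)
    {f : Ω → β} (s : Finset β) (hf : ∀ k ∈ s, MeasurableSet (f ⁻¹' {k})) (A : Set Ω) :
    ∑ k ∈ s, μ (f ⁻¹' {k} ∩ A) ≤ μ A :=
  calc ∑ k ∈ s, μ (f ⁻¹' {k} ∩ A)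
      = ∑ k ∈ s, μ.restrict A (f ⁻¹' {k}) :=
        Finset.sum_congr rfl fun k hk => (Measure.restrict_apply (hf k hk)).symm
    _ = μ.restrict A (f ⁻¹' s) := sum_measure_preimage_singleton s hf
    _ ≤ μ.restrict A Set.univ := measure_mono (Set.subset_univ _)
    _ = μ A := Measure.restrict_apply_univ A

lemma measurable_apply_of_measurable_index {Ω : Type*} [MeasurableSpace Ω] {f : Ω → ℕ}
    {h : ℕ → Ω → ℕ} (hf : Measurable f) (hh : ∀ n, Measurable (h n)) :
    Measurable fun ω => h (f ω) ω :=
  (measurable_from_prod_countable_left (f := fun p : Ω × ℕ => h p.2 p.1) hh).comp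
    (measurable_id.prodMk hf)

lemma exists_iterate_notMem_Icc_of_forall_lt {f : ℕ → ℕ} {k : ℕ}
    (hf : ∀ n, k ≤ n → f n = 0 ∨ n < f n) (K : ℕ) : ∃ d ≤ K, f^[d] k ∉ Set.Icc 1 K := by
  by_contra! hstay
  have hgrow : ∀ d ≤ K, k + d ≤ f^[d] k := by
    intro d
    induction d with
    | zero => simp
    | succ d ih =>
      intro hd
      have hprev := ih (by omega)
      have hnext := (hstay (d + 1) hd).1
      rw [Function.iterate_succ_apply'] at hnext ⊢
      rcases hf (f^[d] k) (by omega) with h0 | hlt <;> omega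
  have hk : 1 ≤ k := (hstay 0 K.zero_le).1
  have hlast := (hstay K le_rfl).2
  have := hgrow K le_rfl
  omega

lemma exists_iterate_notMem_Icc_of_apply_eq_zero {f : ℕ → ℕ} {k : ℕ} (hf : f k = 0) (K : ℕ) :
    ∃ d ≤ K, f^[d] k ∉ Set.Icc 1 K := by
  rcases K.eq_zero_or_pos with rfl | hK
  · exact ⟨0, le_rfl, fun h => by simp at h⟩
  · exact ⟨1, hK, by simp [hf]⟩

namespace DBPC

/-- The size of the next generation of `n` individuals when every offspring variable equals `x`
and every cooperation variable equals `y`. -/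
def constStep (x y n : ℕ) : ℕ := x * n + y * n.choose 2

lemma exists_constStep_escape {Lo Lc : PMF ℕ} (h1 : Lo 1 ≠ 1) (h0 : Lo 0 ≠ 1) (K k : ℕ) :
    ∃ x y, Lo x ≠ 0 ∧ Lc y ≠ 0 ∧ ∃ d ≤ K, (constStep x y)^[d] k ∉ Set.Icc 1 K := by
  obtain ⟨y, hy⟩ := Lc.support_nonempty
  rw [PMF.mem_support_iff] at hy
  by_cases hLo0 : Lo 0 = 0
  · obtain ⟨x, hx1, hx⟩ := Lo.exists_ne_apply_ne_zero h1
    have hx2 : 2 ≤ x := by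
      rcases x with _ | _ | x
      exacts [absurd hLo0 hx, absurd rfl hx1, by omega]
    refine ⟨x, y, hx, hy, exists_iterate_notMem_Icc_of_forall_lt (fun n _ => ?_) K⟩
    rcases n.eq_zero_or_pos with rfl | hn
    · simp [constStep]
    · right
      unfold constStep
      nlinarith
  · by_cases hk : y * k.choose 2 = 0
    · exact ⟨0, y, hLo0, hy, exists_iterate_notMem_Icc_of_apply_eq_zero (by simp [constStep, hk]) K⟩
    · obtain ⟨x, hx0, hx⟩ := Lo.exists_ne_apply_ne_zero h0
      obtain ⟨hy0, hk2⟩ := mul_ne_zero_iff.1 hk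
      rw [Ne, Nat.choose_eq_zero_iff, not_lt] at hk2
      refine ⟨x, y, hx, hy, exists_iterate_notMem_Icc_of_forall_lt (fun n hn => Or.inr ?_) K⟩
      have hpairs : 0 < n.choose 2 := Nat.choose_pos (by omega)
      unfold constStep
      nlinarith [Nat.one_le_iff_ne_zero.2 hx0, Nat.one_le_iff_ne_zero.2 hy0]

abbrev NoiseIndex : Type := (ℕ × ℕ) ⊕ (ℕ × ℕ × ℕ)

namespace NoiseIndex

def generation : NoiseIndex → ℕ := Sum.elim Prod.fst Prod.fst

def shift (t : ℕ) : NoiseIndex → NoiseIndex :=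
  Sum.map (Prod.map (t + ·) id) (Prod.map (t + ·) id)

lemma shift_injective (t : ℕ) : Function.Injective (shift t) :=
  ((add_right_injective t).prodMap Function.injective_id).sumMap
    ((add_right_injective t).prodMap Function.injective_id)

lemma generation_shift (t : ℕ) (a : NoiseIndex) : generation (shift t a) = t + generation a := by
  rcases a with ⟨g, i⟩ | ⟨g, i, j⟩ <;> rfl

end NoiseIndex

open NoiseIndex

/-- The offspring and cooperation variables of the generations `1, …, M` that matter while the
population has at most `K` individuals. -/
def patternIndices (K M : ℕ) : Finset NoiseIndex :=
  (Finset.Icc 1 M ×ˢ Finset.Icc 1 K).disjSum (Finset.Icc 1 M ×ˢ Finset.Icc 1 K ×ˢ Finset.Icc 1 K)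

def patternValue (x y : ℕ) : NoiseIndex → ℕ := Sum.elim (fun _ => x) (fun _ => y)

def noiseLaw (Lo Lc : PMF ℕ) : NoiseIndex → PMF ℕ := Sum.elim (fun _ => Lo) (fun _ => Lc)

lemma one_le_generation_of_mem_patternIndices {K M : ℕ} {a : NoiseIndex}
    (ha : a ∈ patternIndices K M) : 1 ≤ generation a := by
  rcases a with ⟨g, i⟩ | ⟨g, i, j⟩ <;>
    simp_all [patternIndices, generation]

lemma noiseLaw_shift (Lo Lc : PMF ℕ) (t : ℕ) (a : NoiseIndex) :
    noiseLaw Lo Lc (shift t a) = noiseLaw Lo Lc a := by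
  rcases a with ⟨g, i⟩ | ⟨g, i, j⟩ <;> rfl

lemma noiseLaw_patternValue_ne_zero {Lo Lc : PMF ℕ} {x y : ℕ} (hx : Lo x ≠ 0) (hy : Lc y ≠ 0)
    (a : NoiseIndex) : noiseLaw Lo Lc a (patternValue x y a) ≠ 0 := by
  rcases a with ⟨g, i⟩ | ⟨g, i, j⟩
  exacts [hx, hy]

variable {Ω : Type*} [MeasurableSpace Ω] {P : Measure Ω} {Lo Lc : PMF ℕ} {k₀ : ℕ}
  (B : DBPC P Lo Lc k₀)

def noise : NoiseIndex → Ω → ℕ :=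
  Sum.elim (fun q => B.X q.1 q.2) (fun q => B.Y q.1 q.2.1 q.2.2)

lemma iIndepFun_noise : iIndepFun B.noise P := B.indep

lemma measurable_noise (a : NoiseIndex) : Measurable (B.noise a) := by
  rcases a with ⟨g, i⟩ | ⟨g, i, j⟩
  exacts [B.measX g i, B.measY g i j]

lemma map_noise (a : NoiseIndex) : P.map (B.noise a) = (noiseLaw Lo Lc a).toMeasure := by
  rcases a with ⟨g, i⟩ | ⟨g, i, j⟩
  exacts [B.distX g i, B.distY g i j]

lemma measure_noise_preimage_singleton (a : NoiseIndex) (v : ℕ) :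
    P (B.noise a ⁻¹' {v}) = noiseLaw Lo Lc a v := by
  rw [← Measure.map_apply (B.measurable_noise a) (measurableSet_singleton v), B.map_noise,
    PMF.toMeasure_apply_singleton _ _ (measurableSet_singleton v)]

abbrev noiseSigma (s : Set NoiseIndex) : MeasurableSpace Ω :=
  ⨆ a ∈ s, MeasurableSpace.comap (B.noise a) ⊤

lemma noiseSigma_le (s : Set NoiseIndex) : B.noiseSigma s ≤ ‹MeasurableSpace Ω› :=
  iSup₂_le fun a _ => (B.measurable_noise a).comap_le

lemma noiseSigma_mono {s s' : Set NoiseIndex} (h : s ⊆ s') : B.noiseSigma s ≤ B.noiseSigma s' :=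
  iSup₂_le fun a ha => le_iSup₂ (f := fun a (_ : a ∈ s') => MeasurableSpace.comap (B.noise a) ⊤)
    a (h ha)

lemma measurable_noise_noiseSigma {s : Set NoiseIndex} {a : NoiseIndex} (ha : a ∈ s) :
    Measurable[B.noiseSigma s] (B.noise a) :=
  (comap_measurable (B.noise a)).mono
    (le_iSup₂ (f := fun a (_ : a ∈ s) => MeasurableSpace.comap (B.noise a) ⊤) a ha) le_rfl

lemma indep_noiseSigma {s s' : Set NoiseIndex} (h : Disjoint s s') :
    Indep (B.noiseSigma s) (B.noiseSigma s') P :=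
  indep_iSup_of_disjoint (fun a => (B.measurable_noise a).comap_le)
    ((iIndepFun_iff_iIndep _ _ _).mp B.iIndepFun_noise) h

abbrev past (t : ℕ) : MeasurableSpace Ω := B.noiseSigma {a | generation a ≤ t}

abbrev future (t : ℕ) : MeasurableSpace Ω := B.noiseSigma {a | t < generation a}

lemma measure_inter_eq_mul_of_past_future {t : ℕ} {A G : Set Ω}
    (hA : MeasurableSet[B.past t] A) (hG : MeasurableSet[B.future t] G) :
    P (A ∩ G) = P A * P G :=
  have hdisj : Disjoint {a : NoiseIndex | generation a ≤ t} {a | t < generation a} :=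
    Set.disjoint_left.2 fun _ ha ha' => lt_irrefl t (lt_of_lt_of_le ha' ha)
  (Indep_iff _ _ _).1 (B.indep_noiseSigma hdisj) A G hA hG

def nextSize (g n : ℕ) (ω : Ω) : ℕ :=
  (∑ i ∈ Finset.Icc 1 n, B.X (g + 1) i ω) +
    ∑ i ∈ Finset.Icc 1 n, ∑ j ∈ Finset.Ico 1 i, B.Y (g + 1) i j ω

/-- Unlike `B.Z`, which satisfies the recursion only almost surely, this process is measurable
with respect to the noise of the generations up to `g`. -/
def canonicalZ : ℕ → Ω → ℕ
  | 0 => fun _ => k₀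
  | g + 1 => fun ω => B.nextSize g (canonicalZ g ω) ω

lemma measurable_nextSize (g n : ℕ) : Measurable[B.past (g + 1)] (B.nextSize g n) := by
  refine Measurable.add (Finset.measurable_sum _ fun i _ => ?_)
    (Finset.measurable_sum _ fun i _ => Finset.measurable_sum _ fun j _ => ?_)
  · exact B.measurable_noise_noiseSigma (a := .inl (g + 1, i)) (le_refl (g + 1))
  · exact B.measurable_noise_noiseSigma (a := .inr (g + 1, i, j)) (le_refl (g + 1))

lemma measurable_canonicalZ (g : ℕ) : Measurable[B.past g] (B.canonicalZ g) := by
  induction g with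
  | zero => exact measurable_const
  | succ g ih =>
    exact @measurable_apply_of_measurable_index _ (B.past (g + 1)) (B.canonicalZ g) (B.nextSize g)
      (ih.mono (B.noiseSigma_mono fun a ha => Nat.le_succ_of_le ha) le_rfl)
      (B.measurable_nextSize g)

lemma ae_Z_eq_canonicalZ : ∀ᵐ ω ∂P, ∀ g, B.Z g ω = B.canonicalZ g ω := by
  filter_upwards [B.init, ae_all_iff.2 B.step] with ω h0 hstep g
  induction g with
  | zero => exact h0
  | succ g ih => rw [hstep g, ih]; rfl

def patternEvent (K M x y t : ℕ) : Set Ω :=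
  ⋂ a ∈ patternIndices K M, B.noise (shift t a) ⁻¹' {patternValue x y a}

lemma measurableSet_patternEvent (K M x y t : ℕ) :
    MeasurableSet[B.future t] (B.patternEvent K M x y t) := by
  refine Finset.measurableSet_biInter _ fun a ha => ?_
  refine B.measurable_noise_noiseSigma ?_ (measurableSet_singleton _)
  show t < generation (shift t a)
  rw [generation_shift]
  have := one_le_generation_of_mem_patternIndices ha
  omega

lemma measure_patternEvent (K M x y t : ℕ) :
    P (B.patternEvent K M x y t) =
      ∏ a ∈ patternIndices K M, noiseLaw Lo Lc a (patternValue x y a) := by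
  rw [patternEvent, (B.iIndepFun_noise.precomp (shift_injective t)).measure_inter_preimage_eq_mul _
    fun _ _ => measurableSet_singleton _]
  refine Finset.prod_congr rfl fun a _ => ?_
  rw [B.measure_noise_preimage_singleton, noiseLaw_shift]

lemma nextSize_of_mem_patternEvent {K M x y t d n : ℕ} {ω : Ω}
    (hω : ω ∈ B.patternEvent K M x y t) (hd : d < M) (hn : n ≤ K) :
    B.nextSize (t + d) n ω = constStep x y n := by
  have hval := Set.mem_iInter₂.1 hω
  have hX : ∀ i ∈ Finset.Icc 1 n, B.X (t + d + 1) i ω = x := fun i hi =>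
    hval (.inl (d + 1, i)) (by simp_all [patternIndices]; omega)
  have hY : ∀ i ∈ Finset.Icc 1 n, ∀ j ∈ Finset.Ico 1 i, B.Y (t + d + 1) i j ω = y :=
    fun i hi j hj => hval (.inr (d + 1, i, j)) (by simp_all [patternIndices]; omega)
  rw [nextSize, Finset.sum_congr rfl hX,
    Finset.sum_congr rfl fun i hi => Finset.sum_congr rfl (hY i hi)]
  simp only [Finset.sum_const, Nat.card_Icc, Nat.card_Ico, smul_eq_mul, ← Finset.sum_mul,
    Nat.sum_Icc_sub_one_eq_choose_two, constStep]
  rw [Nat.add_sub_cancel]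
  ring

def staysIn (K t : ℕ) : Set Ω := {ω | ∀ g ≤ t, B.canonicalZ g ω ∈ Set.Icc 1 K}

lemma measurableSet_staysIn (K t : ℕ) : MeasurableSet[B.past t] (B.staysIn K t) := by
  simp only [staysIn, Set.ofPred_forall]
  exact .iInter fun g => .iInter fun hg =>
    (B.measurable_canonicalZ g).mono (B.noiseSigma_mono fun a ha => le_trans ha hg) le_rfl
      (.of_discrete)

lemma canonicalZ_add_eq_iterate {K M x y t : ℕ} {ω : Ω} (hω : ω ∈ B.patternEvent K M x y t)
    (hstay : ω ∈ B.staysIn K (t + M)) :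
    ∀ d ≤ M, B.canonicalZ (t + d) ω = (constStep x y)^[d] (B.canonicalZ t ω) := by
  intro d
  induction d with
  | zero => simp
  | succ d ih =>
    intro hd
    rw [Function.iterate_succ_apply', ← ih (by omega), ← B.nextSize_of_mem_patternEvent hω hd
      (hstay (t + d) (by omega)).2]
    rfl

lemma notMem_staysIn_of_mem_patternEvent {K M x y t : ℕ} {ω : Ω}
    (hω : ω ∈ B.patternEvent K M x y t)
    (hesc : ∃ d ≤ M, (constStep x y)^[d] (B.canonicalZ t ω) ∉ Set.Icc 1 K) :
    ω ∉ B.staysIn K (t + M) := by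
  intro hstay
  obtain ⟨d, hd, hout⟩ := hesc
  rw [← B.canonicalZ_add_eq_iterate hω hstay d hd] at hout
  exact hout (hstay (t + d) (by omega))

lemma measure_staysIn_add_le {K M t : ℕ} {r : ENNReal}
    (hG : ∀ k ∈ Finset.Icc 1 K, ∃ G : Set Ω, MeasurableSet[B.future t] G ∧ P Gᶜ ≤ r ∧
      ∀ ω ∈ G, B.canonicalZ t ω = k → ω ∉ B.staysIn K (t + M)) :
    P (B.staysIn K (t + M)) ≤ P (B.staysIn K t) * r := by
  choose! G hGmeas hGr hGesc using hG
  set A : ℕ → Set Ω := fun k => B.canonicalZ t ⁻¹' {k} ∩ B.staysIn K t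
  have hcover : B.staysIn K (t + M) ⊆ ⋃ k ∈ Finset.Icc 1 K, A k ∩ (G k)ᶜ := by
    intro ω hω
    have hk : B.canonicalZ t ω ∈ Finset.Icc 1 K := Finset.mem_Icc.2 (hω t (by omega))
    exact Set.mem_biUnion hk ⟨⟨rfl, fun g hg => hω g (by omega)⟩,
      fun hωG => hGesc _ hk ω hωG rfl hω⟩
  have hA : ∀ k, MeasurableSet[B.past t] (A k) := fun k =>
    (B.measurable_canonicalZ t (measurableSet_singleton k)).inter (B.measurableSet_staysIn K t)
  calc P (B.staysIn K (t + M))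
      ≤ ∑ k ∈ Finset.Icc 1 K, P (A k ∩ (G k)ᶜ) :=
        (measure_mono hcover).trans (measure_biUnion_finset_le _ _)
    _ = ∑ k ∈ Finset.Icc 1 K, P (A k) * P (G k)ᶜ := Finset.sum_congr rfl fun k hk =>
        B.measure_inter_eq_mul_of_past_future (hA k) (hGmeas k hk).compl
    _ ≤ ∑ k ∈ Finset.Icc 1 K, P (A k) * r :=
        Finset.sum_le_sum fun k hk => by gcongr; exact hGr k hk
    _ ≤ P (B.staysIn K t) * r := by
        rw [← Finset.sum_mul]
        gcongr
        exact sum_measure_preimage_singleton_inter_le P _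
          (fun k _ => B.noiseSigma_le _ _ (B.measurable_canonicalZ t (measurableSet_singleton k))) _

lemma measure_forall_canonicalZ_mem_Icc_eq_zero_of_blocks [IsProbabilityMeasure P]
    {K M : ℕ} {r : ENNReal} (hr : r < 1)
    (hG : ∀ t, ∀ k ∈ Finset.Icc 1 K, ∃ G : Set Ω, MeasurableSet[B.future t] G ∧ P Gᶜ ≤ r ∧
      ∀ ω ∈ G, B.canonicalZ t ω = k → ω ∉ B.staysIn K (t + M)) :
    P {ω | ∀ g, B.canonicalZ g ω ∈ Set.Icc 1 K} = 0 := by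
  have hblocks : ∀ n, P (B.staysIn K (n * M)) ≤ r ^ n := by
    intro n
    induction n with
    | zero => simpa using prob_le_one
    | succ n ih =>
      rw [Nat.succ_mul, pow_succ]
      exact (B.measure_staysIn_add_le (hG _)).trans (by gcongr)
  have hsub : ∀ n, {ω | ∀ g, B.canonicalZ g ω ∈ Set.Icc 1 K} ⊆ B.staysIn K (n * M) :=
    fun n ω hω g _ => hω g
  exact nonpos_iff_eq_zero.1 (ge_of_tendsto' (ENNReal.tendsto_pow_atTop_nhds_zero_of_lt_one hr)
    fun n => (measure_mono (hsub n)).trans (hblocks n))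

lemma measure_forall_canonicalZ_mem_Icc_eq_zero [IsProbabilityMeasure P] (h1 : Lo 1 ≠ 1)
    (h0 : Lo 0 ≠ 1) (K : ℕ) : P {ω | ∀ g, B.canonicalZ g ω ∈ Set.Icc 1 K} = 0 := by
  choose x y hx hy hesc using exists_constStep_escape (Lc := Lc) h1 h0 K
  set q : ℕ → ENNReal := fun k =>
    ∏ a ∈ patternIndices K K, noiseLaw Lo Lc a (patternValue (x k) (y k) a)
  have hq : ∀ k, q k ≠ 0 := fun k =>
    Finset.prod_ne_zero_iff.2 fun a _ => noiseLaw_patternValue_ne_zero (hx k) (hy k) a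
  refine B.measure_forall_canonicalZ_mem_Icc_eq_zero_of_blocks (M := K)
    (r := (Finset.Icc 1 K).sup fun k => 1 - q k)
    ((Finset.sup_lt_iff zero_lt_one).2 fun k _ =>
      ENNReal.sub_lt_self ENNReal.one_ne_top one_ne_zero (hq k))
    fun t k hk => ⟨B.patternEvent K K (x k) (y k) t, B.measurableSet_patternEvent .., ?_,
      fun ω hω hωk => B.notMem_staysIn_of_mem_patternEvent hω (hωk ▸ hesc k)⟩
  rw [prob_compl_eq_one_sub (B.noiseSigma_le _ _ (B.measurableSet_patternEvent ..)),
    B.measure_patternEvent]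
  exact Finset.le_sup (f := fun k => 1 - q k) hk

lemma measure_forall_canonicalZ_mem_Icc_eq_zero_of_apply_zero_eq_one [IsProbabilityMeasure P]
    (B : DBPC P Lo Lc 1) (h0 : Lo 0 = 1) (K : ℕ) :
    P {ω | ∀ g, B.canonicalZ g ω ∈ Set.Icc 1 K} = 0 := by
  have hdies : P (B.X 1 1 ⁻¹' {0})ᶜ = 0 := by
    rw [prob_compl_eq_zero_iff (B.measX 1 1 (measurableSet_singleton 0))]
    exact (B.measure_noise_preimage_singleton (.inl (1, 1)) 0).trans h0
  refine measure_mono_null ?_ hdies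
  intro ω hω hX
  have hsize : B.canonicalZ 1 ω = B.X 1 1 ω := by simp [canonicalZ, nextSize]
  simpa [hsize, show B.X 1 1 ω = 0 from hX] using (hω 1).1

lemma measure_forall_Z_mem_Icc_eq_zero [IsProbabilityMeasure P] (B : DBPC P Lo Lc 1)
    (h1 : Lo 1 ≠ 1) (K : ℕ) : P {ω | ∀ g, B.Z g ω ∈ Set.Icc 1 K} = 0 := by
  rw [← nonpos_iff_eq_zero]
  calc P {ω | ∀ g, B.Z g ω ∈ Set.Icc 1 K}
      ≤ P {ω | ∀ g, B.canonicalZ g ω ∈ Set.Icc 1 K} := measure_mono_ae <| by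
        filter_upwards [B.ae_Z_eq_canonicalZ] with ω hω hZ g
        exact hω g ▸ hZ g
    _ = 0 := by
        by_cases h0 : Lo 0 = 1
        · exact B.measure_forall_canonicalZ_mem_Icc_eq_zero_of_apply_zero_eq_one h0 K
        · exact B.measure_forall_canonicalZ_mem_Icc_eq_zero h1 h0 K

lemma measure_survival_le_measure_exists_le [IsProbabilityMeasure P] (B : DBPC P Lo Lc 1)
    (h1 : Lo 1 ≠ 1) (x : ℝ) :
    P {ω | ∀ g, 0 < B.Z g ω} ≤ P {ω | ∃ g, x ≤ ((B.Z g ω : ℕ) : ℝ)} := by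
  refine measure_mono_ae ?_
  filter_upwards [measure_eq_zero_iff_ae_notMem.1 (B.measure_forall_Z_mem_Icc_eq_zero h1 ⌈x⌉₊)]
    with ω hbdd hsurv
  obtain ⟨g, hg⟩ : ∃ g, ¬ (1 ≤ B.Z g ω ∧ B.Z g ω ≤ ⌈x⌉₊) := by simpa using hbdd
  refine ⟨g, (Nat.le_ceil x).trans ?_⟩
  have := hsurv g
  exact_mod_cast (show ⌈x⌉₊ ≤ B.Z g ω by omega)

lemma ae_Z_add_eq_zero : ∀ᵐ ω ∂P, ∀ g, B.Z g ω = 0 → ∀ d, B.Z (g + d) ω = 0 := by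
  filter_upwards [ae_all_iff.2 B.step] with ω hstep g hg d
  induction d with
  | zero => exact hg
  | succ d ih => rw [← add_assoc, hstep, ih]; simp

lemma tendsto_measure_exists_le_totalSize [IsFiniteMeasure P] :
    Tendsto (fun x : ℝ => P {ω | ∃ g : ℕ,
        x ≤ ((∑ i ∈ Finset.range (g + 1), B.Z i ω : ℕ) : ℝ)}) atTop
      (𝓝 (P {ω | ∀ g : ℕ, 0 < B.Z g ω})) := by
  set T : ℝ → Set Ω := fun x => {ω | ∃ g : ℕ,
    x ≤ ((∑ i ∈ Finset.range (g + 1), B.Z i ω : ℕ) : ℝ)}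
  have hmeas : ∀ x, MeasurableSet (T x) := fun x => by
    simp only [T, Set.ofPred_exists]
    exact .iUnion fun g =>
      (Finset.measurable_sum _ fun i _ => B.measZ i) (.of_discrete (s := {n : ℕ | x ≤ n}))
  have hinter : ⋂ x, T x =ᵐ[P] {ω | ∀ g : ℕ, 0 < B.Z g ω} := by
    refine eventuallyEq_set.2 ?_
    filter_upwards [B.ae_Z_add_eq_zero] with ω habs
    simpa only [T, Set.mem_iInter, Set.mem_ofPred_eq] using forall_exists_le_sum_range_iff habs
  have := tendsto_measure_iInter_atTop (μ := P) (fun x => (hmeas x).nullMeasurableSet)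
    (fun x x' hxx' ω ⟨g, hg⟩ => ⟨g, hxx'.trans hg⟩) ⟨0, measure_ne_top P _⟩
  rwa [measure_congr hinter] at this

end DBPC

theorem dbpc_reaching_level_eq_survival_general {Ω : Type*} [MeasurableSpace Ω]
    (P : Measure Ω) [IsProbabilityMeasure P] (Lo Lc : PMF ℕ)
    (B : DBPC P Lo Lc 1)
    (h1 : Lo 1 ≠ 1)
    (b : ℕ → ℝ) (hb : Tendsto b atTop atTop) :
    Tendsto (fun N => (P {ω | ∃ g : ℕ,
        b N ≤ ((∑ i ∈ Finset.range (g + 1), B.Z i ω : ℕ) : ℝ)}).toReal) atTop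
      (nhds ((P {ω | ∀ g : ℕ, 0 < B.Z g ω}).toReal)) ∧
    Tendsto (fun N => (P {ω | ∃ g : ℕ, b N ≤ ((B.Z g ω : ℕ) : ℝ)}).toReal) atTop
      (nhds ((P {ω | ∀ g : ℕ, 0 < B.Z g ω}).toReal)) := by
  have htotal := B.tendsto_measure_exists_le_totalSize.comp hb
  have hcurrent : Tendsto (fun N => P {ω | ∃ g : ℕ, b N ≤ ((B.Z g ω : ℕ) : ℝ)}) atTop
      (𝓝 (P {ω | ∀ g : ℕ, 0 < B.Z g ω})) :=
    tendsto_of_tendsto_of_tendsto_of_le_of_le tendsto_const_nhds htotal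
      (fun N => B.measure_survival_le_measure_exists_le h1 (b N))
      (fun N => measure_mono fun ω ⟨g, hg⟩ => ⟨g, hg.trans (Nat.cast_le.2
        (Finset.single_le_sum (fun i _ => Nat.zero_le (B.Z i ω)) (Finset.self_mem_range_succ g)))⟩)
  exact ⟨(ENNReal.tendsto_toReal (measure_ne_top P _)).comp htotal,
    (ENNReal.tendsto_toReal (measure_ne_top P _)).comp hcurrent⟩

/-- For a single DBPC started at `1` with positive survival probability `π`,
`p_{1,o} ≠ 1` and not both `p_{0,o} = 1` and `p_{1,c} = 1`, the probability
of the total size ever reaching `b_N`, and of the current size ever reaching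
`b_N`, both converge to `π` whenever `b_N → ∞`. -/
theorem dbpc_reaching_level_eq_survival {Ω : Type*} [MeasurableSpace Ω]
    (P : Measure Ω) [IsProbabilityMeasure P] (Lo Lc : PMF ℕ)
    (B : DBPC P Lo Lc 1)
    (hπ : 0 < (P {ω | ∀ g : ℕ, 0 < B.Z g ω}).toReal)
    (h1 : Lo 1 ≠ 1) (h2 : ¬(Lo 0 = 1 ∧ Lc 1 = 1))
    (b : ℕ → ℝ) (hb : Tendsto b atTop atTop) :
    Tendsto (fun N => (P {ω | ∃ g : ℕ,
        b N ≤ ((∑ i ∈ Finset.range (g + 1), B.Z i ω : ℕ) : ℝ)}).toReal) atTop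
      (nhds ((P {ω | ∀ g : ℕ, 0 < B.Z g ω}).toReal)) ∧
    Tendsto (fun N => (P {ω | ∃ g : ℕ, b N ≤ ((B.Z g ω : ℕ) : ℝ)}).toReal) atTop
      (nhds ((P {ω | ∀ g : ℕ, 0 < B.Z g ω}).toReal)) :=
  dbpc_reaching_level_eq_survival_general P Lo Lc B h1 b hb
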